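/- Correctness of the width-minimizing dynamic-programming recurrence for the RIPP-C: given rectangles with widths w_1 ≥ w_2 ≥ … and heights h_1 ≥ h_2 ≥ … (h_1 > 0), define G(i,j,k), for integers i,j ≥ 1 and k ≥ 0, as the minimum of W_w(A) over all i×j RC layouts A with H_h(A) ≤ k (G(i,j,k) = +∞ if no such layout exists), with the conventions G(i,j,k) = +∞ whenever i ≤ 0 or j ≤ 0 or k < h_1. Then G(1,1,k) = w_1 for all k ≥ h_1, and for all i,j with i+j ≥ 3 and all k, G(i,j,k) = min{ G(i,j−1,k) + w_{ij−i+1}, G(i−1,j, k − h_{ij−j+1}) }. -/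

import Mathlib

/-- A `p × q` layout: a matrix whose entries are exactly the integers `1, …, p*q`. -/
def IsLayout (p q : ℕ) (A : Fin p → Fin q → ℕ) : Prop :=
  Function.Injective (fun ij : Fin p × Fin q => A ij.1 ij.2) ∧
  (Set.range fun ij : Fin p × Fin q => A ij.1 ij.2) = Set.Icc 1 (p * q)

/-- Width of a layout with respect to side lengths `l`. -/
def layW (l : ℕ → ℕ) {p q : ℕ} (A : Fin p → Fin q → ℕ) : ℕ :=
  ∑ j : Fin q, Finset.univ.sup fun i : Fin p => l (A i j)

/-- Height of a layout with respect to side lengths `l`. -/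
def layH (l : ℕ → ℕ) {p q : ℕ} (A : Fin p → Fin q → ℕ) : ℕ :=
  ∑ i : Fin p, Finset.univ.sup fun j : Fin q => l (A i j)

/-- RC layouts: obtainable from the 1×1 base layout by add-row and add-column operations. -/
inductive IsRC : {p q : ℕ} → (Fin p → Fin q → ℕ) → Prop
  | base : IsRC (fun (_ : Fin 1) (_ : Fin 1) => 1)
  | addRow {p q : ℕ} {A : Fin p → Fin q → ℕ} (h : IsRC A) :
      IsRC (fun (i : Fin (p + 1)) (j : Fin q) =>
        if hi : (i : ℕ) < p then A ⟨i, hi⟩ j else p * q + (j : ℕ) + 1)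
  | addCol {p q : ℕ} {A : Fin p → Fin q → ℕ} (h : IsRC A) :
      IsRC (fun (i : Fin p) (j : Fin (q + 1)) =>
        if hj : (j : ℕ) < q then A i ⟨j, hj⟩ else p * q + (i : ℕ) + 1)

/-- `G(i,j,k)`: the minimum width (w.r.t. widths `w`) of an `i × j` RC layout whose height
(w.r.t. heights `h`) is at most `k` (`⊤` if no such layout exists). -/
noncomputable def Gdp (w h : ℕ → ℕ) (i j k : ℕ) : ℕ∞ :=
  sInf {v : ℕ∞ | ∃ A : Fin i → Fin j → ℕ, IsRC A ∧ layH h A ≤ k ∧ v = (layW w A : ℕ∞)}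

/-
An RC layout of size `(p+1) × (q+1)` is obtained either by appending a column to an RC layout of
size `(p+1) × q` or by appending a row to one of size `p × (q+1)`. Because the sides are
nonincreasing and the appended items are the largest-indexed ones, appending a column
`pq+1, …, pq+p` adds exactly `w (pq+1)` to the width and leaves the height unchanged (each new item
is no taller than the first item of its row), and dually appending a row adds `h (pq+1)` to the
height and leaves the width unchanged. Hence minimising over the two kinds of last step gives the
recurrence; minima exist because `ℕ∞` is well-ordered. Transposition swaps rows with columns
and width with height, so the column facts follow from the row facts. Every RC layout contains
item `1`, so its height is at least `h 1`.
-/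

open Finset Function

lemma Fin.sup_univ_castSucc {α : Type*} [SemilatticeSup α] [OrderBot α] {n : ℕ}
    (f : Fin (n + 1) → α) :
    univ.sup f = (univ.sup fun i : Fin n => f i.castSucc) ⊔ f (Fin.last n) := by
  rw [Fin.univ_castSuccEmb, sup_cons, sup_map, sup_comm]
  rfl

lemma layW_swap (l : ℕ → ℕ) {p q : ℕ} (A : Fin p → Fin q → ℕ) :
    layW l (swap A) = layH l A :=
  rfl

lemma layH_swap (l : ℕ → ℕ) {p q : ℕ} (A : Fin p → Fin q → ℕ) :
    layH l (swap A) = layW l A :=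
  rfl

def appendRow {p q : ℕ} (A : Fin p → Fin q → ℕ) : Fin (p + 1) → Fin q → ℕ :=
  fun i j => if hi : (i : ℕ) < p then A ⟨i, hi⟩ j else p * q + (j : ℕ) + 1

def appendCol {p q : ℕ} (A : Fin p → Fin q → ℕ) : Fin p → Fin (q + 1) → ℕ :=
  fun i j => if hj : (j : ℕ) < q then A i ⟨j, hj⟩ else p * q + (i : ℕ) + 1

section Append

variable {p q : ℕ} (A : Fin p → Fin q → ℕ)

@[simp]
lemma appendRow_castSucc (i : Fin p) (j : Fin q) : appendRow A i.castSucc j = A i j := by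
  simp [appendRow]

@[simp]
lemma appendRow_last (j : Fin q) : appendRow A (Fin.last p) j = p * q + (j : ℕ) + 1 := by
  simp [appendRow]

@[simp]
lemma appendCol_castSucc (i : Fin p) (j : Fin q) : appendCol A i j.castSucc = A i j := by
  simp [appendCol]

lemma appendCol_eq_swap_appendRow_swap : appendCol A = swap (appendRow (swap A)) := by
  funext i j
  simp only [appendCol, appendRow, swap, Nat.mul_comm p q]

lemma layH_appendRow {h : ℕ → ℕ} (hh : AntitoneOn h (Set.Ici 1)) (hq : 0 < q) :
    layH h (appendRow A) = layH h A + h (p * q + 1) := by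
  have hlast : (univ.sup fun j : Fin q => h (p * q + (j : ℕ) + 1)) = h (p * q + 1) :=
    le_antisymm (Finset.sup_le fun j _ => hh (by simp) (by simp) (by omega))
      (Finset.le_sup (f := fun j : Fin q => h (p * q + (j : ℕ) + 1)) (mem_univ ⟨0, hq⟩) :)
  simp [layH, Fin.sum_univ_castSucc, hlast]

lemma layW_appendRow {w : ℕ → ℕ} (hw : AntitoneOn w (Set.Ici 1)) (hp : 0 < p)
    (hA : ∀ i j, A i j ∈ Set.Icc 1 (p * q)) :
    layW w (appendRow A) = layW w A := by
  refine Finset.sum_congr rfl fun j _ => ?_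
  have hnew : w (p * q + (j : ℕ) + 1) ≤ univ.sup fun i : Fin p => w (A i j) :=
    calc w (p * q + (j : ℕ) + 1) ≤ w (A ⟨0, hp⟩ j) :=
          hw (hA _ _).1 (by simp) (by have := (hA ⟨0, hp⟩ j).2; omega)
      _ ≤ _ := Finset.le_sup (f := fun i : Fin p => w (A i j)) (mem_univ _)
  simpa [Fin.sup_univ_castSucc] using hnew

lemma layW_appendCol {w : ℕ → ℕ} (hw : AntitoneOn w (Set.Ici 1)) (hp : 0 < p) :
    layW w (appendCol A) = layW w A + w (p * q + 1) := by
  rw [appendCol_eq_swap_appendRow_swap, layW_swap, layH_appendRow _ hw hp, layH_swap,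
    Nat.mul_comm]

lemma layH_appendCol {h : ℕ → ℕ} (hh : AntitoneOn h (Set.Ici 1)) (hq : 0 < q)
    (hA : ∀ i j, A i j ∈ Set.Icc 1 (p * q)) :
    layH h (appendCol A) = layH h A := by
  rw [appendCol_eq_swap_appendRow_swap, layH_swap]
  exact layW_appendRow _ hh hq fun j i => Nat.mul_comm q p ▸ hA i j

lemma appendRow_mem_Icc (hA : ∀ i j, A i j ∈ Set.Icc 1 (p * q)) (i : Fin (p + 1)) (j : Fin q) :
    appendRow A i j ∈ Set.Icc 1 ((p + 1) * q) := by
  refine Fin.lastCases ?_ (fun i => ?_) i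
  · simp only [appendRow_last, Set.mem_Icc]
    constructor <;> nlinarith [j.isLt]
  · simpa using Set.Icc_subset_Icc_right (by nlinarith) (hA i j)

lemma appendCol_mem_Icc (hA : ∀ i j, A i j ∈ Set.Icc 1 (p * q)) (i : Fin p) (j : Fin (q + 1)) :
    appendCol A i j ∈ Set.Icc 1 (p * (q + 1)) := by
  rw [appendCol_eq_swap_appendRow_swap, Nat.mul_comm]
  exact appendRow_mem_Icc _ (fun j i => Nat.mul_comm q p ▸ hA i j) j i

end Append

namespace IsRC

variable {p q : ℕ} {A : Fin p → Fin q → ℕ}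

lemma appendRow (hA : IsRC A) : IsRC (appendRow A) := hA.addRow

lemma appendCol (hA : IsRC A) : IsRC (appendCol A) := hA.addCol

lemma mem_Icc (hA : IsRC A) : ∀ i j, A i j ∈ Set.Icc 1 (p * q) := by
  induction hA with
  | base => simp
  | addRow _ ih => exact appendRow_mem_Icc _ ih
  | addCol _ ih => exact appendCol_mem_Icc _ ih

lemma exists_eq_one (hA : IsRC A) : ∃ i j, A i j = 1 := by
  induction hA with
  | base => exact ⟨0, 0, rfl⟩
  | addRow _ ih =>
    obtain ⟨i, j, hij⟩ := ih
    exact ⟨i.castSucc, j, (appendRow_castSucc _ i j).trans hij⟩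
  | addCol _ ih =>
    obtain ⟨i, j, hij⟩ := ih
    exact ⟨i, j.castSucc, (appendCol_castSucc _ i j).trans hij⟩

lemma pos (hA : IsRC A) : 0 < p ∧ 0 < q :=
  let ⟨i, j, _⟩ := hA.exists_eq_one
  ⟨i.pos, j.pos⟩

lemma apply_one_le_layH (hA : IsRC A) (h : ℕ → ℕ) : h 1 ≤ layH h A := by
  obtain ⟨i, j, hij⟩ := hA.exists_eq_one
  calc h 1 = h (A i j) := by rw [hij]
    _ ≤ univ.sup fun j => h (A i j) := Finset.le_sup (f := fun j => h (A i j)) (mem_univ j)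
    _ ≤ layH h A := Finset.single_le_sum (f := fun i => univ.sup fun j => h (A i j))
        (fun _ _ => Nat.zero_le _) (mem_univ i)

end IsRC

section Gdp

variable {w h : ℕ → ℕ} {i j k : ℕ}

lemma gdp_le_layW {A : Fin i → Fin j → ℕ} (hA : IsRC A) (hH : layH h A ≤ k) :
    Gdp w h i j k ≤ layW w A :=
  sInf_le ⟨A, hA, hH, rfl⟩

lemma le_gdp {c : ℕ∞} (hc : ∀ A : Fin i → Fin j → ℕ, IsRC A → layH h A ≤ k → c ≤ layW w A) :
    c ≤ Gdp w h i j k :=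
  le_sInf <| by rintro _ ⟨A, hA, hH, rfl⟩; exact hc A hA hH

lemma gdp_eq_top (hk : ∀ A : Fin i → Fin j → ℕ, IsRC A → k < layH h A) : Gdp w h i j k = ⊤ :=
  top_le_iff.mp <| le_gdp fun A hA hH => absurd hH (hk A hA).not_ge

lemma exists_gdp_eq_layW (hG : Gdp w h i j k ≠ ⊤) :
    ∃ A : Fin i → Fin j → ℕ, IsRC A ∧ layH h A ≤ k ∧ Gdp w h i j k = layW w A := by
  have hne : {v : ℕ∞ | ∃ A : Fin i → Fin j → ℕ, IsRC A ∧ layH h A ≤ k ∧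
      v = layW w A}.Nonempty :=
    Set.nonempty_iff_ne_empty.mpr fun hS => hG (by rw [Gdp, hS, sInf_empty])
  exact csInf_mem hne

lemma gdp_le_gdp_add {i' j' k' : ℕ} {c : ℕ∞}
    (hext : ∀ B : Fin i' → Fin j' → ℕ, IsRC B → layH h B ≤ k' →
      ∃ A : Fin i → Fin j → ℕ, IsRC A ∧ layH h A ≤ k ∧ (layW w A : ℕ∞) ≤ layW w B + c) :
    Gdp w h i j k ≤ Gdp w h i' j' k' + c := by
  by_cases hG : Gdp w h i' j' k' = ⊤
  · simp [hG]
  obtain ⟨B, hB, hHB, hGB⟩ := exists_gdp_eq_layW hG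
  obtain ⟨A, hA, hHA, hWA⟩ := hext B hB hHB
  calc Gdp w h i j k ≤ layW w A := gdp_le_layW hA hHA
    _ ≤ layW w B + c := hWA
    _ = Gdp w h i' j' k' + c := by rw [hGB]

end Gdp

lemma gdp_one_one {w h : ℕ → ℕ} {k : ℕ} (hk : h 1 ≤ k) : Gdp w h 1 1 k = w 1 := by
  refine le_antisymm ?_ (le_gdp fun A hA _ => ?_)
  · simpa [layW] using gdp_le_layW (w := w) IsRC.base (by simpa [layH] using hk)
  · obtain ⟨i, j, hij⟩ := hA.exists_eq_one
    rw [Subsingleton.elim i 0, Subsingleton.elim j 0] at hij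
    simp [layW, hij]

lemma gdp_succ_succ {w h : ℕ → ℕ} (hw : AntitoneOn w (Set.Ici 1))
    (hh : AntitoneOn h (Set.Ici 1)) {p q k : ℕ} (hpq : 0 < p + q) :
    Gdp w h (p + 1) (q + 1) k =
      min (Gdp w h (p + 1) q k + w ((p + 1) * q + 1))
        (if h (p * (q + 1) + 1) ≤ k then Gdp w h p (q + 1) (k - h (p * (q + 1) + 1)) else ⊤) := by
  refine le_antisymm (le_min ?viaCol ?viaRow) (le_gdp fun A hA hH => ?_)
  case viaCol =>
    refine gdp_le_gdp_add fun B hB hHB => ⟨appendCol B, hB.appendCol, ?_, ?_⟩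
    · rwa [layH_appendCol _ hh hB.pos.2 hB.mem_Icc]
    · rw [layW_appendCol _ hw p.succ_pos, Nat.cast_add]
  case viaRow =>
    split_ifs with hk
    · refine (gdp_le_gdp_add (c := 0) fun B hB hHB =>
        ⟨appendRow B, hB.appendRow, ?_, ?_⟩).trans_eq (add_zero _)
      · rw [layH_appendRow _ hh hB.pos.2]; omega
      · rw [layW_appendRow _ hw hB.pos.1 hB.mem_Icc, add_zero]
    · exact le_top
  cases hA with
  | base => omega
  | @addRow _ _ B hB =>
    change layH h (appendRow B) ≤ k at hH
    rw [layH_appendRow _ hh hB.pos.2] at hH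
    change _ ≤ (layW w (appendRow B) : ℕ∞)
    rw [layW_appendRow _ hw hB.pos.1 hB.mem_Icc, if_pos (by omega)]
    exact min_le_of_right_le (gdp_le_layW hB (by omega))
  | @addCol _ _ B hB =>
    change layH h (appendCol B) ≤ k at hH
    rw [layH_appendCol _ hh hB.pos.2 hB.mem_Icc] at hH
    change _ ≤ (layW w (appendCol B) : ℕ∞)
    rw [layW_appendCol _ hw p.succ_pos, Nat.cast_add]
    exact min_le_of_left_le (add_le_add_left (gdp_le_layW hB hH) _)

theorem ripp_dp_recurrence_general (w h : ℕ → ℕ)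
    (hw : ∀ a b, 1 ≤ a → a ≤ b → w b ≤ w a)
    (hh : ∀ a b, 1 ≤ a → a ≤ b → h b ≤ h a) :
    (∀ i j k, (i = 0 ∨ j = 0 ∨ k < h 1) → Gdp w h i j k = ⊤) ∧
    (∀ k, h 1 ≤ k → Gdp w h 1 1 k = (w 1 : ℕ∞)) ∧
    (∀ i j k, 1 ≤ i → 1 ≤ j → 3 ≤ i + j →
      Gdp w h i j k =
        min (Gdp w h i (j - 1) k + (w (i * j - i + 1) : ℕ∞))
          (if h (i * j - j + 1) ≤ k then Gdp w h (i - 1) j (k - h (i * j - j + 1)) else ⊤)) := by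
  refine ⟨fun i j k hdeg => gdp_eq_top fun A hA => ?_, fun k => gdp_one_one, ?_⟩
  · have := hA.pos
    have := hA.apply_one_le_layH h
    omega
  intro i j k hi hj hij
  obtain ⟨p, rfl⟩ : ∃ p, i = p + 1 := ⟨i - 1, by omega⟩
  obtain ⟨q, rfl⟩ : ∃ q, j = q + 1 := ⟨j - 1, by omega⟩
  have hcol : (p + 1) * (q + 1) - (p + 1) + 1 = (p + 1) * q + 1 := by rw [Nat.mul_succ]; omega
  have hrow : (p + 1) * (q + 1) - (q + 1) + 1 = p * (q + 1) + 1 := by rw [Nat.succ_mul]; omega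
  rw [hcol, hrow, Nat.add_sub_cancel, Nat.add_sub_cancel]
  exact gdp_succ_succ (fun a ha b _ hab => hw a b ha hab) (fun a ha b _ hab => hh a b ha hab)
    (by omega)

/-- Correctness of the width-minimizing dynamic-programming recurrence for
the RIPP-C: `G(i,j,k) = ⊤` when `i = 0`, `j = 0` or `k < h 1`; `G(1,1,k) = w 1` for `k ≥ h 1`;
and for `i, j ≥ 1` with `i + j ≥ 3`,
`G(i,j,k) = min (G(i,j-1,k) + w_{ij-i+1}) (G(i-1,j,k - h_{ij-j+1}))`, the second term being
`⊤` when `h_{ij-j+1} > k`. -/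
theorem ripp_dp_recurrence (w h : ℕ → ℕ)
    (hw : ∀ a b, 1 ≤ a → a ≤ b → w b ≤ w a)
    (hh : ∀ a b, 1 ≤ a → a ≤ b → h b ≤ h a) (hpos : 0 < h 1) :
    (∀ i j k, (i = 0 ∨ j = 0 ∨ k < h 1) → Gdp w h i j k = ⊤) ∧
    (∀ k, h 1 ≤ k → Gdp w h 1 1 k = (w 1 : ℕ∞)) ∧
    (∀ i j k, 1 ≤ i → 1 ≤ j → 3 ≤ i + j →
      Gdp w h i j k =
        min (Gdp w h i (j - 1) k + (w (i * j - i + 1) : ℕ∞))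
          (if h (i * j - j + 1) ≤ k then Gdp w h (i - 1) j (k - h (i * j - j + 1)) else ⊤)) :=
  ripp_dp_recurrence_general w h hw hh
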